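/- Let β₄ = (11 − 3√11)/2 and β₅ = (7 − 3√3)/2. For every x₁ ∈ [β₄, β₅], the number h = √(12x₁ + 42) − 6 − x₁ satisfies h ≤ x₁ and the indifference equation A(x₁,h) = C(x₁,h), i.e. 1 + 2h = min_{t∈[0,1]} G(x₁,h,t). -/
import Mathlib


/-- Expected final rank in Robbins' problem with 4 observations, first two observations
`x₁, x₂`, third accepted iff `≤ h`, fourth always accepted. -/
noncomputable def G (x₁ x₂ h : ℝ) : ℝ :=
  3/2 + h^2 - h + (2 - x₁ - x₂) * (1 - h) + max (h - x₁) 0 + max (h - x₂) 0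

/-- Optimal expected rank from rejecting the second observation:
`C x₁ x₂ = min_{t ∈ [0,1]} G x₁ x₂ t`. -/
noncomputable def C (x₁ x₂ : ℝ) : ℝ := sInf (G x₁ x₂ '' Set.Icc 0 1)

/-- Expected rank from accepting the second observation `u` given first observation `x`. -/
noncomputable def A (x u : ℝ) : ℝ := 1 + (if x ≤ u then (1:ℝ) else 0) + 2*u

set_option maxHeartbeats 1600000 in
theorem robbins_n4_h2_branch5 :
    ∀ x₁ ∈ Set.Icc ((11 - 3 * Real.sqrt 11)/2) ((7 - 3 * Real.sqrt 3)/2), ∀ h : ℝ,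
      h = Real.sqrt (12*x₁ + 42) - 6 - x₁ →
      h ≤ x₁ ∧ A x₁ h = C x₁ h ∧ 1 + 2*h = C x₁ h := by
  intro x₁ hx₁ h hh
  obtain ⟨hxl, hxr⟩ := hx₁
  have hq11 : Real.sqrt 11 ^ 2 = 11 := Real.sq_sqrt (by norm_num)
  have hq11n : (0:ℝ) ≤ Real.sqrt 11 := Real.sqrt_nonneg _
  have hq3 : Real.sqrt 3 ^ 2 = 3 := Real.sq_sqrt (by norm_num)
  have hq3n : (0:ℝ) ≤ Real.sqrt 3 := Real.sqrt_nonneg _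
  have hq11u : Real.sqrt 11 ≤ 10/3 := by nlinarith [sq_nonneg (Real.sqrt 11 - 10/3)]
  have hq11l : (3:ℝ) ≤ Real.sqrt 11 := by nlinarith [sq_nonneg (Real.sqrt 11 - 3)]
  have hq3l : (1:ℝ) ≤ Real.sqrt 3 := by nlinarith [sq_nonneg (Real.sqrt 3 - 1)]
  have hq3u : Real.sqrt 3 ≤ 2 := by nlinarith [sq_nonneg (Real.sqrt 3 - 2)]
  have hx05 : (1:ℝ)/2 ≤ x₁ := by nlinarith
  have hx1 : x₁ ≤ 1 := by nlinarith
  set r := Real.sqrt (12*x₁ + 42) with hrdef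
  have hr2 : r ^ 2 = 12*x₁ + 42 := Real.sq_sqrt (by nlinarith)
  have hrn : (0:ℝ) ≤ r := Real.sqrt_nonneg _
  have hr8 : r ≤ 8 := by nlinarith [sq_nonneg (r - 8)]
  have hr6 : (6:ℝ) ≤ r := by nlinarith
  -- h < x₁
  have hhx : h < x₁ := by
    have h6 : r < 6 + 2*x₁ := by nlinarith
    rw [hh]; linarith
  have hhx' : h ≤ x₁ := le_of_lt hhx
  -- minimizer
  set t : ℝ := 4 - r/2 with htdef
  have ht0 : (0:ℝ) ≤ t := by simp only [htdef]; linarith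
  have ht1 : t ≤ 1 := by simp only [htdef]; linarith
  have htx : t ≤ x₁ := by
    -- need 8 - 2x₁ ≤ r ; from x₁ ≥ (11 - 3√11)/2
    have hfac : 0 ≤ (x₁ - (11 - 3*Real.sqrt 11)/2) * ((11 + 3*Real.sqrt 11)/2 - x₁) := by
      apply mul_nonneg <;> nlinarith
    have hexp : (x₁ - (11 - 3*Real.sqrt 11)/2) * ((11 + 3*Real.sqrt 11)/2 - x₁)
        = -x₁^2 + 11*x₁ - 11/2 := by linear_combination (9/4 : ℝ) * hq11
    rw [hexp] at hfac
    have hsq : (8 - 2*x₁)^2 ≤ r^2 := by nlinarith [hfac, hr2]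
    have : 8 - 2*x₁ ≤ r := by nlinarith [hsq, hrn, hx1]
    simp only [htdef]; linarith
  have hth : h ≤ t := by
    -- need 3r ≤ 20 + 2x₁ ; from x₁ ≤ (7 - 3√3)/2
    have hfac : 0 ≤ ((7 - 3*Real.sqrt 3)/2 - x₁) * ((7 + 3*Real.sqrt 3)/2 - x₁) := by
      apply mul_nonneg <;> nlinarith
    have hexp : ((7 - 3*Real.sqrt 3)/2 - x₁) * ((7 + 3*Real.sqrt 3)/2 - x₁)
        = x₁^2 - 7*x₁ + 11/2 := by linear_combination (-9/4 : ℝ) * hq3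
    rw [hexp] at hfac
    have hsq : 9 * r^2 ≤ (20 + 2*x₁)^2 := by nlinarith [hfac, hr2]
    have h3r : 3*r ≤ 20 + 2*x₁ := by nlinarith [hsq, hrn, hx05]
    simp only [htdef, hh]; linarith
  -- equality at t
  have hGt : G x₁ h t = 1 + 2*h := by
    have hm1 : max (t - x₁) 0 = 0 := max_eq_right (by linarith)
    have hm2 : max (t - h) 0 = t - h := max_eq_left (by linarith)
    simp only [G]
    rw [hm1, hm2, htdef, hh]
    linear_combination (-(1:ℝ)/4) * hr2
  -- lower bound
  have hlow : ∀ u ∈ Set.Icc (0:ℝ) 1, 1 + 2*h ≤ G x₁ h u := by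
    intro u hu
    have hm1 : (0:ℝ) ≤ max (u - x₁) 0 := le_max_right _ _
    have hm2 : u - h ≤ max (u - h) 0 := le_max_left _ _
    have hsq := sq_nonneg (u - (4 - r/2))
    simp only [G, hh] at *
    nlinarith [hr2]
  -- compute C
  have hmem : G x₁ h t ∈ G x₁ h '' Set.Icc 0 1 := ⟨t, ⟨ht0, ht1⟩, rfl⟩
  have hne : (G x₁ h '' Set.Icc 0 1).Nonempty := ⟨_, hmem⟩
  have hbdd : BddBelow (G x₁ h '' Set.Icc 0 1) := by
    refine ⟨1 + 2*h, ?_⟩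
    rintro y ⟨u, hu, rfl⟩
    exact hlow u hu
  have hC : C x₁ h = 1 + 2*h := by
    refine le_antisymm ?_ ?_
    · calc C x₁ h ≤ G x₁ h t := csInf_le hbdd hmem
        _ = 1 + 2*h := hGt
    · exact le_csInf hne (by rintro y ⟨u, hu, rfl⟩; exact hlow u hu)
  refine ⟨hhx', ?_, hC.symm⟩
  simp only [A, if_neg (not_le.mpr hhx), hC]
  ring
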